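/- Let g ⊆ so(1,n+1)_{ℝp} be a Lie subalgebra containing (i) an element of the form (0, A_r, X_r + ψ(A_r)) for each member A_r of a generating set of a Lie subalgebra h ⊆ so(m) (with X_r ∈ ℝᵐ and ψ : h → ℝ^{n−m} linear, vanishing on [h,h]), and (ii) all elements (0,0,X) with X ∈ ℝᵐ. Then g contains g^{4,h,m,ψ} = {(0, A, X + ψ(A)) : A ∈ h, X ∈ ℝᵐ}. -/

import Mathlib

open Matrix

attribute [local instance] LieRing.ofAssociativeRing

/-- Index type for `ℝ^{1,n+1}` with basis `p, e_1, …, e_n, q`. -/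
abbrev Idx (n : ℕ) := Fin 1 ⊕ (Fin n ⊕ Fin 1)

/-- The Gram matrix `[[0,0,1],[0,E_n,0],[1,0,0]]` of the Minkowski form `η`. -/
noncomputable def eta (n : ℕ) : Matrix (Idx n) (Idx n) ℝ :=
  Matrix.fromBlocks 0 (Matrix.of fun _ j => Sum.elim (fun _ => (0 : ℝ)) (fun _ => 1) j)
    (Matrix.of fun i _ => Sum.elim (fun _ => (0 : ℝ)) (fun _ => 1) i)
    (Matrix.fromBlocks 1 0 0 0)

/-- The matrix `[[a, X, 0], [0, A, -Xᵀ], [0, 0, -a]]` associated to the triple `(a, A, X)`. -/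
noncomputable def toMat {n : ℕ} (a : ℝ) (A : Matrix (Fin n) (Fin n) ℝ) (X : Fin n → ℝ) :
    Matrix (Idx n) (Idx n) ℝ :=
  Matrix.fromBlocks (Matrix.of fun _ _ => a)
    (Matrix.of fun _ j => Sum.elim X (fun _ => (0 : ℝ)) j)
    0
    (Matrix.fromBlocks A (Matrix.of fun i _ => -X i) 0 (Matrix.of fun _ _ => -a))

/-- The first basis vector `p`. -/
noncomputable def pvec (n : ℕ) : Idx n → ℝ := Pi.single (Sum.inl 0) 1

/-- `so(1,n+1)`: matrices skew-symmetric with respect to `η`. -/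
noncomputable def soEta (n : ℕ) : Set (Matrix (Idx n) (Idx n) ℝ) :=
  {M | Mᵀ * eta n + eta n * M = 0}

/-- `so(1,n+1)_{ℝp}`: elements of `so(1,n+1)` preserving the isotropic line `ℝ p`. -/
noncomputable def stab (n : ℕ) : Set (Matrix (Idx n) (Idx n) ℝ) :=
  {M | M ∈ soEta n ∧ M.mulVec (pvec n) ∈ Submodule.span ℝ {pvec n}}

/-- `so(n)` as a Lie subalgebra of the matrix Lie algebra. -/
noncomputable def son (n : ℕ) : LieSubalgebra ℝ (Matrix (Fin n) (Fin n) ℝ) :=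
  skewAdjointMatricesLieSubalgebra (1 : Matrix (Fin n) (Fin n) ℝ)

/-!
Since `h` acts trivially on `ℝ^{n-m}`, where `ψ` takes its values, and `ψ` kills `[h, h]`, `ψ` is a
1-cocycle, so `A ↦ (0, A, ψ A)` is a Lie algebra homomorphism `h → so(1,n+1)_{ℝp}`. The preimage of
`g` under it is a Lie subalgebra of `h` containing the generators (subtract `(0, 0, X_r)` from the
given elements), hence all of `h`; adding `(0, 0, X)` gives the claim.
-/

lemma toMat_add {n : ℕ} (a b : ℝ) (A B : Matrix (Fin n) (Fin n) ℝ) (X Y : Fin n → ℝ) :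
    toMat (a + b) (A + B) (X + Y) = toMat a A X + toMat b B Y := by
  ext (i | i | i) (j | j | j) <;> simp [toMat, Matrix.fromBlocks] <;> ring

lemma toMat_smul {n : ℕ} (c a : ℝ) (A : Matrix (Fin n) (Fin n) ℝ) (X : Fin n → ℝ) :
    toMat (c * a) (c • A) (c • X) = c • toMat a A X := by
  ext (i | i | i) (j | j | j) <;> simp [toMat, Matrix.fromBlocks]

lemma toMat_lie {n : ℕ} (a b : ℝ) {A B : Matrix (Fin n) (Fin n) ℝ} (hA : Aᵀ = -A) (hB : Bᵀ = -B)
    (X Y : Fin n → ℝ) :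
    ⁅toMat a A X, toMat b B Y⁆ = toMat 0 ⁅A, B⁆ (a • Y - b • X + A *ᵥ Y - B *ᵥ X) := by
  have skew_sum {C : Matrix (Fin n) (Fin n) ℝ} (hC : Cᵀ = -C) (Z : Fin n → ℝ) (j : Fin n) :
      ∑ k, Z k * C k j = -∑ k, C j k * Z k := by
    rw [← Finset.sum_neg_distrib]
    refine Finset.sum_congr rfl fun k _ => ?_
    rw [show C k j = -C j k by simpa using congrFun (congrFun hC j) k]
    ring
  ext (i | i | i) (j | j | j) <;>
    simp [Ring.lie_def, toMat, Matrix.mul_apply, Fintype.sum_sum_type, Matrix.fromBlocks,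
      Matrix.mulVec, dotProduct, skew_sum hA, skew_sum hB, mul_comm (Y _) (X _)] <;> ring

lemma transpose_eq_neg_of_mem_son {n : ℕ} {A : Matrix (Fin n) (Fin n) ℝ} (hA : A ∈ son n) :
    Aᵀ = -A := by
  simpa [son, mem_skewAdjointMatricesSubmodule, Matrix.IsSkewAdjoint, Matrix.IsAdjointPair]
    using hA

lemma Matrix.mulVec_eq_zero_of_support_disjoint {ι κ R : Type*} [Fintype ι]
    [NonUnitalNonAssocSemiring R] (p : ι → Prop) {A : Matrix κ ι R} {Z : ι → R}
    (hA : ∀ i j, ¬ p j → A i j = 0) (hZ : ∀ j, p j → Z j = 0) : A *ᵥ Z = 0 := by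
  funext i
  refine Finset.sum_eq_zero fun j _ => ?_
  by_cases hj : p j
  · simp [hZ j hj]
  · simp [hA i j hj]

@[simps]
noncomputable def toMatOfCocycle {n : ℕ} (h : LieSubalgebra ℝ (Matrix (Fin n) (Fin n) ℝ))
    (hh : h ≤ son n) (ψ : h →ₗ[ℝ] (Fin n → ℝ))
    (hψ : ∀ A B : h, ψ ⁅A, B⁆ = (A : Matrix (Fin n) (Fin n) ℝ) *ᵥ ψ B - (B : Matrix _ _ ℝ) *ᵥ ψ A) :
    h →ₗ⁅ℝ⁆ Matrix (Idx n) (Idx n) ℝ where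
  toFun A := toMat 0 A (ψ A)
  map_add' A B := by simpa using toMat_add 0 0 A B (ψ A) (ψ B)
  map_smul' c A := by simpa using toMat_smul c 0 A (ψ A)
  map_lie' {A B} := by
    rw [toMat_lie 0 0 (transpose_eq_neg_of_mem_son (hh A.2))
      (transpose_eq_neg_of_mem_son (hh B.2)), hψ]
    simp

theorem stmt19_general (n m : ℕ)
    (g : LieSubalgebra ℝ (Matrix (Idx n) (Idx n) ℝ))
    (h : LieSubalgebra ℝ (Matrix (Fin n) (Fin n) ℝ)) (hh : h ≤ son n)
    (hblock : ∀ A ∈ h, ∀ i j : Fin n, m ≤ (i : ℕ) ∨ m ≤ (j : ℕ) → A i j = 0)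
    (ψ : h →ₗ[ℝ] (Fin n → ℝ))
    (hψsupp : ∀ (A : h) (i : Fin n), (i : ℕ) < m → ψ A i = 0)
    (hψ : ∀ A B : h, ψ ⁅A, B⁆ = 0)
    (S : Set h) (hgen : LieSubalgebra.lieSpan ℝ h S = ⊤)
    (hAr : ∀ A ∈ S, ∃ X : Fin n → ℝ, (∀ i : Fin n, m ≤ (i : ℕ) → X i = 0) ∧
      toMat 0 (A : Matrix (Fin n) (Fin n) ℝ) (X + ψ A) ∈ g)
    (hX : ∀ X : Fin n → ℝ, (∀ i : Fin n, m ≤ (i : ℕ) → X i = 0) →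
      toMat 0 (0 : Matrix (Fin n) (Fin n) ℝ) X ∈ g) :
    ∀ (A : h) (X : Fin n → ℝ), (∀ i : Fin n, m ≤ (i : ℕ) → X i = 0) →
      toMat 0 (A : Matrix (Fin n) (Fin n) ℝ) (X + ψ A) ∈ g := by
  have hact (A B : h) : (A : Matrix (Fin n) (Fin n) ℝ) *ᵥ ψ B = 0 :=
    Matrix.mulVec_eq_zero_of_support_disjoint (fun j : Fin n => (j : ℕ) < m)
      (fun i j hj => hblock A A.2 i j (Or.inr (not_lt.mp hj))) (hψsupp B)
  have hcocycle (A B : h) : ψ ⁅A, B⁆ = (A : Matrix _ _ ℝ) *ᵥ ψ B - (B : Matrix _ _ ℝ) *ᵥ ψ A := by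
    rw [hψ, hact, hact, sub_zero]
  set φ := toMatOfCocycle h hh ψ hcocycle
  have hsplit (A : h) (X : Fin n → ℝ) :
      toMat 0 (A : Matrix (Fin n) (Fin n) ℝ) (X + ψ A) = toMat 0 0 X + φ A := by
    simpa [φ] using toMat_add 0 0 0 A X (ψ A)
  have hS : S ⊆ g.comap φ := fun A hA => by
    obtain ⟨X, hXsupp, hAX⟩ := hAr A hA
    rw [hsplit] at hAX
    simpa using g.sub_mem hAX (hX X hXsupp)
  intro A X hXsupp
  have hA : A ∈ g.comap φ := (LieSubalgebra.lieSpan_le.mpr hS) (hgen ▸ LieSubalgebra.mem_top A)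
  rw [hsplit]
  exact g.add_mem (hX X hXsupp) hA

/-- If a Lie subalgebra `g ⊆ so(1,n+1)_{ℝp}` contains an element `(0, A_r, X_r + ψ(A_r))` for each
member `A_r` of a generating set of `h ⊆ so(m)` (with `X_r ∈ ℝᵐ`, `ψ` linear and vanishing on the
commutant), and contains all `(0,0,X)` with `X ∈ ℝᵐ`, then `g` contains
`g^{4,h,m,ψ} = {(0, A, X + ψ(A)) : A ∈ h, X ∈ ℝᵐ}`. -/
theorem stmt19 (n m : ℕ) (hmn : m ≤ n)
    (g : LieSubalgebra ℝ (Matrix (Idx n) (Idx n) ℝ))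
    (hg : (g : Set (Matrix (Idx n) (Idx n) ℝ)) ⊆ stab n)
    (h : LieSubalgebra ℝ (Matrix (Fin n) (Fin n) ℝ)) (hh : h ≤ son n)
    (hblock : ∀ A ∈ h, ∀ i j : Fin n, m ≤ (i : ℕ) ∨ m ≤ (j : ℕ) → A i j = 0)
    (ψ : h →ₗ[ℝ] (Fin n → ℝ))
    (hψsupp : ∀ (A : h) (i : Fin n), (i : ℕ) < m → ψ A i = 0)
    (hψ : ∀ A B : h, ψ ⁅A, B⁆ = 0)
    (S : Set h) (hgen : LieSubalgebra.lieSpan ℝ h S = ⊤)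
    (hAr : ∀ A ∈ S, ∃ X : Fin n → ℝ, (∀ i : Fin n, m ≤ (i : ℕ) → X i = 0) ∧
      toMat 0 (A : Matrix (Fin n) (Fin n) ℝ) (X + ψ A) ∈ g)
    (hX : ∀ X : Fin n → ℝ, (∀ i : Fin n, m ≤ (i : ℕ) → X i = 0) →
      toMat 0 (0 : Matrix (Fin n) (Fin n) ℝ) X ∈ g) :
    ∀ (A : h) (X : Fin n → ℝ), (∀ i : Fin n, m ≤ (i : ℕ) → X i = 0) →
      toMat 0 (A : Matrix (Fin n) (Fin n) ℝ) (X + ψ A) ∈ g :=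
  stmt19_general n m g h hh hblock ψ hψsupp hψ S hgen hAr hX
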